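/- arXiv:2005.02216 — 2 statements merged into one kernel-verified Lean document; each statement's English description precedes it below -/
import Mathlib

section
/- For a positive integer a and real x, the exponential generating function identity holds: ((e^t - 1)/t)^a * e^{xt} = \sum_{m=0}^{\infty} (t^m/m!) * \sum_{l=0}^{m} S(l+a, a) * x^{m-l} * C(m,l) * C(l+a, a)^{-1}, where S(n,k) denotes the Stirling numbers of the second kind. -/
open Finset PowerSeries

/-- Stirling numbers of the second kind. -/
def stirling2 : ℕ → ℕ → ℕ
  | 0, 0 => 1
  | 0, _ + 1 => 0
  | _ + 1, 0 => 0
  | n + 1, k + 1 => (k + 1) * stirling2 n (k + 1) + stirling2 n k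

/-- Partial Bell polynomial `B_{n,k}(x 1, x 2, ...)`, summing over sequences
`ℓ` of nonnegative integers with `∑ i * ℓ i = n` and `∑ ℓ i = k`. -/
noncomputable def bellPoly (n k : ℕ) (x : ℕ → ℝ) : ℝ :=
  ∑ ℓ ∈ (Fintype.piFinset fun _ : Fin n => Finset.range (n + 1)).filter
      (fun ℓ => (∑ i, (i.1 + 1) * ℓ i) = n ∧ (∑ i, ℓ i) = k),
    ((n.factorial : ℝ) / ∏ i, ((ℓ i).factorial : ℝ)) *
      ∏ i, (x (i.1 + 1) / ((i.1 + 1).factorial : ℝ)) ^ (ℓ i)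

/-- The power series `(e^t - 1)/t`, with constant term `1`. -/
noncomputable def expm1DivT : PowerSeries ℝ :=
  PowerSeries.mk fun n => 1 / ((n + 1).factorial : ℝ)

/-- The power series `e^{x t}`. -/
noncomputable def expSeries (x : ℝ) : PowerSeries ℝ :=
  PowerSeries.mk fun n => x ^ n / (n.factorial : ℝ)

/-- The generalized Bernoulli polynomial value `B_n^a(-x)`, defined via the
exponential generating function `(t/(e^t-1))^a e^{-x t}`. -/
noncomputable def genBernoulliNeg (a : ℕ) (x : ℝ) (n : ℕ) : ℝ :=
  (n.factorial : ℝ) * PowerSeries.coeff n ((expm1DivT ^ a)⁻¹ * expSeries (-x))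

/-!
Differentiating gives `d/dt (e^t - 1)^(k+1) = (k+1) ((e^t - 1)^(k+1) + (e^t - 1)^k)`, which on
coefficients is exactly the recurrence of `S(n, k)`; hence `(e^t - 1)^k` has `t^n`-coefficient
`k! S(n, k) / n!`. Since `t · (e^t - 1)/t = e^t - 1`, the `t^n`-coefficient of `((e^t - 1)/t)^a`
is `a! S(n + a, a) / (n + a)! = S(n + a, a) / (C(n + a, a) n!)`, and multiplying by `e^{xt}` is
a Cauchy product.
-/

section QAlgebra

variable {A : Type*} [CommRing A] [Algebra ℚ A]

theorem derivative_exp : d⁄dX A (exp A) = exp A := by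
  ext n
  rw [coeff_derivative, coeff_exp, coeff_exp, ← Nat.cast_succ,
    ← map_natCast (algebraMap ℚ A), ← map_mul]
  congr 1
  push_cast [Nat.factorial_succ]
  field_simp

theorem derivative_exp_sub_one_pow (k : ℕ) :
    d⁄dX A ((exp A - 1) ^ (k + 1)) = (k + 1) • ((exp A - 1) ^ (k + 1) + (exp A - 1) ^ k) := by
  rw [Derivation.leibniz_pow, map_sub, Derivation.map_one_eq_zero, sub_zero, derivative_exp,
    Nat.add_sub_cancel, smul_eq_mul]
  ring

end QAlgebra

section CharZeroField

variable {K : Type*} [Field K] [CharZero K]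

theorem coeff_succ_exp_sub_one_pow (N k : ℕ) :
    ((N : K) + 1) * coeff (N + 1) ((exp K - 1) ^ (k + 1)) =
      ((k : K) + 1) * (coeff N ((exp K - 1) ^ (k + 1)) + coeff N ((exp K - 1) ^ k)) := by
  have h := congrArg (coeff N) (derivative_exp_sub_one_pow (A := K) k)
  rwa [coeff_derivative, map_nsmul, map_add, nsmul_eq_mul, mul_comm, Nat.cast_succ] at h

theorem coeff_exp_sub_one_pow (k N : ℕ) :
    coeff N ((exp K - 1) ^ k) = (k.factorial * stirling2 N k / N.factorial : K) := by
  induction k generalizing N with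
  | zero => cases N <;> simp [stirling2, coeff_one]
  | succ k ihk =>
    induction N with
    | zero => simp [stirling2, coeff_zero_eq_constantCoeff, constantCoeff_exp]
    | succ N ihN =>
      have h := coeff_succ_exp_sub_one_pow (K := K) N k
      rw [ihN, ihk] at h
      have hN : (N : K) + 1 ≠ 0 := Nat.cast_add_one_ne_zero N
      rw [← mul_right_inj' hN, h, stirling2, Nat.factorial_succ, Nat.factorial_succ]
      push_cast
      field_simp

end CharZeroField

theorem X_mul_expm1DivT : X * expm1DivT = exp ℝ - 1 := by
  ext (_ | n)
  · simp [expm1DivT]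
  · simp [coeff_succ_X_mul, expm1DivT, coeff_exp]

theorem coeff_expm1DivT_pow (a n : ℕ) :
    coeff n (expm1DivT ^ a) = stirling2 (n + a) a * ((n + a).choose a : ℝ)⁻¹ / n.factorial := by
  have h := congrArg (coeff (n + a)) (congrArg (· ^ a) X_mul_expm1DivT)
  simp only [mul_pow, coeff_X_pow_mul, coeff_exp_sub_one_pow] at h
  rw [h, Nat.cast_choose ℝ (Nat.le_add_left a n), Nat.add_sub_cancel]
  field_simp

theorem egf_expansion_general (a : ℕ) (x : ℝ) :
    expm1DivT ^ a * expSeries x =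
      PowerSeries.mk (fun m =>
        (∑ l ∈ Finset.range (m + 1),
          (stirling2 (l + a) a : ℝ) * x ^ (m - l) * (m.choose l : ℝ) *
            ((l + a).choose a : ℝ)⁻¹) / (m.factorial : ℝ)) := by
  ext m
  rw [coeff_mul, Nat.sum_antidiagonal_eq_sum_range_succ_mk, coeff_mk, sum_div]
  refine sum_congr rfl fun l hl => ?_
  have hlm : l ≤ m := Nat.lt_succ_iff.mp (mem_range.mp hl)
  rw [coeff_expm1DivT_pow, expSeries, coeff_mk, Nat.cast_choose ℝ hlm]
  field_simp

/-- EGF identity: `((e^t-1)/t)^a e^{xt} = ∑_m (t^m/m!) ∑_{l=0}^m S(l+a,a) x^{m-l} C(m,l) C(l+a,a)⁻¹`. -/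
theorem egf_expansion (a : ℕ) (ha : 0 < a) (x : ℝ) :
    expm1DivT ^ a * expSeries x =
      PowerSeries.mk (fun m =>
        (∑ l ∈ Finset.range (m + 1),
          (stirling2 (l + a) a : ℝ) * x ^ (m - l) * (m.choose l : ℝ) *
            ((l + a).choose a : ℝ)⁻¹) / (m.factorial : ℝ)) :=
  egf_expansion_general a x
end

section
/- For every nonnegative integer n, the Bernoulli number B_n satisfies B_n = \sum_{k=0}^{n} (-1)^k * k! * B_{n,k}(1/2, 1/3, ..., 1/(n-k+1)), where B_{n,k} denotes the partial Bell polynomial. -/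
open Finset PowerSeries

/-! Put `g(t) = (e^t - 1)/t - 1 = ∑_{m ≥ 1} t^m/(m+1)!`. Expanding `g^k` by the multinomial
theorem gives `k! B_{n,k}(1/2, 1/3, …) = n! [t^n] g^k`. Since `t/(e^t - 1) = 1/(1 + g)` and `g` has
no constant term, the geometric series gives `[t^n] 1/(1 + g) = ∑_{k ≤ n} (-1)^k [t^n] g^k`. -/

open scoped Nat

namespace PowerSeries

variable {R : Type*}

theorem coeff_sum_C_mul_X_pow_pow [CommSemiring R] {ι : Type*} [DecidableEq ι] (s : Finset ι)
    (a : ι → R) (w : ι → ℕ) (m k : ℕ) :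
    coeff m ((∑ i ∈ s, C (a i) * X ^ w i) ^ k) =
      ∑ ℓ ∈ (piAntidiag s k).filter (fun ℓ => ∑ i ∈ s, w i * ℓ i = m),
        (Nat.multinomial s ℓ : R) * ∏ i ∈ s, a i ^ ℓ i := by
  rw [sum_pow_eq_sum_piAntidiag, map_sum, sum_filter]
  refine sum_congr rfl fun ℓ _ => ?_
  have hmonomial : ∏ i ∈ s, (C (a i) * X ^ w i) ^ ℓ i =
      C (∏ i ∈ s, a i ^ ℓ i) * X ^ (∑ i ∈ s, w i * ℓ i) := by
    simp only [mul_pow, prod_mul_distrib, map_prod, map_pow, ← pow_mul, prod_pow_eq_pow_sum]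
  rw [hmonomial, ← map_natCast (C (R := R)), ← mul_assoc, ← map_mul, coeff_C_mul_X_pow]
  simp only [eq_comm (a := m)]

theorem coeff_pow_eq_of_X_pow_dvd_sub [CommRing R] {f g : R⟦X⟧} {n : ℕ}
    (h : X ^ (n + 1) ∣ f - g) (k : ℕ) : coeff n (f ^ k) = coeff n (g ^ k) := by
  have := X_pow_dvd_iff.1 (h.trans (sub_dvd_pow_sub_pow f g k)) n n.lt_succ_self
  rwa [map_sub, sub_eq_zero] at this

theorem coeff_eq_sum_neg_one_pow_mul_coeff_pow [CommRing R] {f g : R⟦X⟧}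
    (hfg : f * (1 + g) = 1) (hg : constantCoeff g = 0) (n : ℕ) :
    coeff n f = ∑ k ∈ range (n + 1), (-1) ^ k * coeff n (g ^ k) := by
  have hgeom : (∑ k ∈ range (n + 1), (-g) ^ k) * (1 + g) = 1 - (-g) ^ (n + 1) := by
    linear_combination -geom_sum_mul (-g) (n + 1)
  have hsum : ∑ k ∈ range (n + 1), (-g) ^ k = f - f * (-g) ^ (n + 1) := by
    calc ∑ k ∈ range (n + 1), (-g) ^ k
        = f * (1 + g) * ∑ k ∈ range (n + 1), (-g) ^ k := by rw [hfg, one_mul]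
      _ = f - f * (-g) ^ (n + 1) := by rw [mul_assoc, mul_comm (1 + g), hgeom, mul_sub, mul_one]
  have htail : coeff n (f * (-g) ^ (n + 1)) = 0 := by
    refine X_pow_dvd_iff.1 (Dvd.dvd.mul_left (pow_dvd_pow_of_dvd ?_ _) f) n n.lt_succ_self
    rwa [X_dvd_iff, map_neg, neg_eq_zero]
  calc coeff n f = coeff n (∑ k ∈ range (n + 1), (-g) ^ k) := by
        rw [hsum, map_sub, htail, sub_zero]
    _ = ∑ k ∈ range (n + 1), (-1) ^ k * coeff n (g ^ k) := by
        rw [map_sum]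
        refine sum_congr rfl fun k _ => ?_
        rw [neg_pow, show (-1 : R⟦X⟧) ^ k = C ((-1) ^ k) by simp, coeff_C_mul]

end PowerSeries

noncomputable def bellSeries (x : ℕ → ℝ) : ℝ⟦X⟧ :=
  mk fun m => if m = 0 then 0 else x m / m !

theorem constantCoeff_bellSeries (x : ℕ → ℝ) : constantCoeff (bellSeries x) = 0 := by
  simp [bellSeries, ← coeff_zero_eq_constantCoeff_apply]

theorem bellPoly_eq_sum_piAntidiag (n k : ℕ) (x : ℕ → ℝ) :
    bellPoly n k x =
      ∑ ℓ ∈ (piAntidiag univ k).filter (fun ℓ : Fin n → ℕ => ∑ i, (i.1 + 1) * ℓ i = n),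
        ((n ! : ℝ) / ∏ i, ((ℓ i)! : ℝ)) * ∏ i, (x (i.1 + 1) / ((i.1 + 1)! : ℝ)) ^ ℓ i := by
  refine sum_congr (ext fun ℓ => ?_) fun _ _ => rfl
  simp only [mem_filter, Fintype.mem_piFinset, mem_range, mem_piAntidiag, mem_univ,
    implies_true, and_true]
  refine ⟨fun ⟨_, hw, hs⟩ => ⟨hs, hw⟩, fun ⟨hs, hw⟩ => ⟨fun i => ?_, hw, hs⟩⟩
  calc ℓ i ≤ (i.1 + 1) * ℓ i := Nat.le_mul_of_pos_left _ i.1.succ_pos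
    _ ≤ ∑ j, (j.1 + 1) * ℓ j :=
      single_le_sum (f := fun j => (j.1 + 1) * ℓ j) (fun j _ => Nat.zero_le _) (mem_univ i)
    _ < n + 1 := by omega

theorem factorial_mul_bellPoly (n k : ℕ) (x : ℕ → ℝ) :
    k ! * bellPoly n k x =
      n ! * ∑ ℓ ∈ (piAntidiag univ k).filter (fun ℓ : Fin n → ℕ => ∑ i, (i.1 + 1) * ℓ i = n),
        (Nat.multinomial univ ℓ : ℝ) * ∏ i, (x (i.1 + 1) / ((i.1 + 1)! : ℝ)) ^ ℓ i := by
  rw [bellPoly_eq_sum_piAntidiag, mul_sum, mul_sum]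
  refine sum_congr rfl fun ℓ hℓ => ?_
  have hk : ∑ i, ℓ i = k := (mem_piAntidiag.1 (mem_filter.1 hℓ).1).1
  have hspec : (∏ i, ((ℓ i)! : ℝ)) * Nat.multinomial univ ℓ = k ! := by
    exact_mod_cast hk ▸ Nat.multinomial_spec univ ℓ
  have hprod : (∏ i, ((ℓ i)! : ℝ)) ≠ 0 := prod_ne_zero_iff.2 fun i _ => by positivity
  rw [← hspec]
  field_simp

theorem X_pow_dvd_bellSeries_sub (n : ℕ) (x : ℕ → ℝ) :
    X ^ (n + 1) ∣
      bellSeries x - ∑ i : Fin n, C (x (i.1 + 1) / ((i.1 + 1)! : ℝ)) * X ^ (i.1 + 1) := by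
  refine X_pow_dvd_iff.2 fun m hm => ?_
  rw [map_sub, map_sum, bellSeries, coeff_mk, sub_eq_zero]
  simp only [coeff_C_mul_X_pow]
  rcases m with _ | m
  · simp
  rw [Fin.sum_univ_eq_sum_range (fun i => if m + 1 = i + 1 then x (i + 1) / ((i + 1)! : ℝ) else 0),
    if_neg m.succ_ne_zero]
  simp only [add_left_inj, sum_ite_eq, mem_range, if_pos (show m < n by omega)]

theorem factorial_mul_bellPoly_eq_coeff (n k : ℕ) (x : ℕ → ℝ) :
    k ! * bellPoly n k x = n ! * coeff n (bellSeries x ^ k) := by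
  rw [coeff_pow_eq_of_X_pow_dvd_sub (X_pow_dvd_bellSeries_sub n x), coeff_sum_C_mul_X_pow_pow,
    factorial_mul_bellPoly]

theorem one_add_bellSeries_one_div_succ :
    1 + bellSeries (fun m => 1 / ((m : ℝ) + 1)) = expm1DivT := by
  ext m
  rcases m with _ | m
  · simp [bellSeries, expm1DivT]
  · simp [bellSeries, expm1DivT, Nat.factorial_succ]
    field_simp

theorem bernoulliPowerSeries_mul_expm1DivT : bernoulliPowerSeries ℝ * expm1DivT = 1 := by
  have hX : X * expm1DivT = exp ℝ - 1 := by
    ext m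
    rcases m with _ | m
    · simp [expm1DivT]
    · simp [expm1DivT, coeff_succ_X_mul]
  refine mul_left_cancel₀ (X_ne_zero (R := ℝ)) ?_
  rw [mul_left_comm, hX, bernoulliPowerSeries_mul_exp_sub_one, mul_one]

/-- Qi's closed form: `B_n = ∑_{k=0}^n (-1)^k k! B_{n,k}(1/2, 1/3, …, 1/(n-k+1))`. -/
theorem bernoulli_closed_form (n : ℕ) :
    (bernoulli n : ℝ) =
      ∑ k ∈ Finset.range (n + 1),
        (-1 : ℝ) ^ k * (k.factorial : ℝ) *
          bellPoly n k (fun m => 1 / ((m : ℝ) + 1)) := by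
  have hB : (bernoulli n : ℝ) = n ! * coeff n (bernoulliPowerSeries ℝ) := by
    rw [bernoulliPowerSeries, coeff_mk, map_div₀, map_natCast, eq_ratCast]
    field_simp
  rw [hB, coeff_eq_sum_neg_one_pow_mul_coeff_pow (one_add_bellSeries_one_div_succ ▸
    bernoulliPowerSeries_mul_expm1DivT) (constantCoeff_bellSeries _), mul_sum]
  refine sum_congr rfl fun k _ => ?_
  rw [mul_assoc, factorial_mul_bellPoly_eq_coeff]
  ring
end
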